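/- arXiv:2407.19831 — 5 statements merged into one kernel-verified Lean document; each statement's English description precedes it below -/
import Mathlib

section
/- A student is improvable (i.e., there exists a Pareto-efficient matching Pareto-dominating the DA matching in which the student receives a strictly preferred school) if and only if the student belongs to some cycle of the envy digraph of the DA matching. -/
/-- Student `i` envies student `j` at matching `μ`. -/
def Envies {I S : Type*} (pref : I → S → S → Prop) (μ : I → S) (i j : I) : Prop :=
  pref i (μ j) (μ i)

/-- `ν` weakly Pareto-dominates `μ`: every student is weakly better off. -/
def WeaklyDominates {I S : Type*} (pref : I → S → S → Prop) (ν μ : I → S) : Prop :=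
  ∀ i, ν i = μ i ∨ pref i (ν i) (μ i)

/-- A matching is Pareto-efficient if no matching Pareto-dominates it. -/
def ParetoEfficient {I S : Type*} (pref : I → S → S → Prop) (μ : I ≃ S) : Prop :=
  ¬ ∃ ν : I ≃ S, WeaklyDominates pref (⇑ν) (⇑μ) ∧ ∃ j, pref j (ν j) (μ j)

/-- Student `i` belongs to some (simple) cycle of the envy digraph of `μ`. -/
def OnEnvyCycle {I S : Type*} (pref : I → S → S → Prop) (μ : I → S) (i : I) : Prop :=
  ∃ (m : ℕ) (c : Fin (m + 1) → I), Function.Injective c ∧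
    (∀ t, Envies pref μ (c t) (c (t + 1))) ∧ ∃ t, c t = i

section aux

variable {I S : Type*} (pref : I → S → S → Prop)

lemma wd_refl (μ : I → S) : WeaklyDominates pref μ μ := fun _ => Or.inl rfl

lemma wd_trans (hpref : ∀ i, IsStrictTotalOrder S (pref i)) {a b c : I → S}
    (hab : WeaklyDominates pref a b) (hbc : WeaklyDominates pref b c) :
    WeaklyDominates pref a c := by
  intro i
  haveI := hpref i
  rcases hab i with h1 | h1 <;> rcases hbc i with h2 | h2
  · exact Or.inl (h1.trans h2)
  · exact Or.inr (h1 ▸ h2)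
  · exact Or.inr (h2 ▸ h1)
  · exact Or.inr (IsTrans.trans _ _ _ h1 h2)

lemma exists_pe [Finite I] [Finite S] (hpref : ∀ i, IsStrictTotalOrder S (pref i)) (ν : I ≃ S) :
    ∃ ν' : I ≃ S, ParetoEfficient pref ν' ∧ WeaklyDominates pref (⇑ν') (⇑ν) := by
  let r : (I ≃ S) → (I ≃ S) → Prop := fun a b =>
    WeaklyDominates pref (⇑a) (⇑b) ∧ ∃ j, pref j (a j) (b j)
  haveI : IsIrrefl (I ≃ S) r := ⟨by rintro a ⟨_, j, hj⟩; exact (hpref j).irrefl _ hj⟩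
  haveI : IsTrans (I ≃ S) r := ⟨by
    rintro a b c ⟨hab, j, hj⟩ ⟨hbc, _⟩
    refine ⟨wd_trans pref hpref hab hbc, j, ?_⟩
    haveI := hpref j
    rcases hbc j with h | h
    · exact h ▸ hj
    · exact IsTrans.trans _ _ _ hj h⟩
  have hwf : WellFounded r := Finite.wellFounded_of_trans_of_irrefl r
  obtain ⟨m, hm, hmin⟩ := hwf.has_min {x : I ≃ S | WeaklyDominates pref (⇑x) (⇑ν)}
    ⟨ν, wd_refl pref _⟩
  refine ⟨m, ?_, hm⟩
  rintro ⟨x, hxd, hxs⟩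
  exact hmin x (wd_trans pref hpref hxd hm) ⟨hxd, hxs⟩

end aux

/-- A student is improvable (some Pareto-efficient matching dominating the DA
matching gives him a strictly preferred school) iff he belongs to a cycle of
DA's envy digraph. -/
theorem stmt1 {I S : Type*} [Fintype I] [Fintype S] (pref : I → S → S → Prop)
    (hpref : ∀ i, IsStrictTotalOrder S (pref i)) (da : I ≃ S) (i : I) :
    (∃ ν : I ≃ S, ParetoEfficient pref ν ∧ WeaklyDominates pref (⇑ν) (⇑da) ∧
      pref i (ν i) (da i)) ↔ OnEnvyCycle pref (⇑da) i := by
  classical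
  constructor
  · rintro ⟨ν, -, hwd, hstrict⟩
    -- the improvement permutation
    set σ : Equiv.Perm I := ν.trans da.symm with hσdef
    have hda : ∀ j, da (σ j) = ν j := fun j => da.apply_symm_apply (ν j)
    have key : ∀ j, σ j = j ∨ pref j (da (σ j)) (da j) := by
      intro j
      rcases hwd j with h | h
      · left
        have : σ j = da.symm (da j) := by
          simp [hσdef, Equiv.trans_apply, h]
        simpa using this
      · right; rw [hda j]; exact h
    have hi : σ i ≠ i := by
      intro h
      have : ν i = da i := by rw [← hda i, h]
      exact (hpref i).irrefl _ (this ▸ hstrict)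
    -- minimal period of i
    have hex : ∃ k, 0 < k ∧ (σ ^ k) i = i := by
      refine ⟨orderOf σ, ?_, ?_⟩
      · exact orderOf_pos σ
      · rw [pow_orderOf_eq_one]; rfl
    obtain ⟨hnpos, hniter⟩ := Nat.find_spec hex
    have hmin : ∀ k, 0 < k → k < Nat.find hex → (σ ^ k) i ≠ i := by
      intro k hk hkn hki
      exact Nat.find_min hex hkn ⟨hk, hki⟩
    obtain ⟨m, hn⟩ : ∃ m, Nat.find hex = m + 1 :=
      ⟨Nat.find hex - 1, (Nat.succ_pred_eq_of_pos hnpos).symm⟩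
    rw [hn] at hniter hmin
    refine ⟨m, fun t => (σ ^ (t : ℕ)) i, ?_, ?_, ⟨0, by simp⟩⟩
    · -- injectivity
      have haux : ∀ a b : ℕ, a ≤ b → b < m + 1 → (σ ^ a) i = (σ ^ b) i → a = b := by
        intro a b hab hb heq
        by_contra hne
        have hba : 0 < b - a := Nat.sub_pos_of_lt (lt_of_le_of_ne hab hne)
        have hcomm : (σ ^ a) ((σ ^ (b - a)) i) = (σ ^ a) i := by
          have : σ ^ a * σ ^ (b - a) = σ ^ b := by
            rw [← pow_add]; congr 1; omega
          calc (σ ^ a) ((σ ^ (b - a)) i) = (σ ^ a * σ ^ (b - a)) i := rfl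
            _ = (σ ^ b) i := by rw [this]
            _ = (σ ^ a) i := heq.symm
        have : (σ ^ (b - a)) i = i := (σ ^ a).injective hcomm
        exact hmin (b - a) hba (by omega) this
      intro a b hab
      rcases le_total (a : ℕ) (b : ℕ) with h | h
      · exact Fin.ext (haux _ _ h b.isLt hab)
      · exact Fin.ext ((haux _ _ h a.isLt hab.symm).symm)
    · -- envy edges
      intro t
      have hshift : (σ ^ ((t + 1 : Fin (m + 1)) : ℕ)) i = σ ((σ ^ (t : ℕ)) i) := by
        have hval : ((t + 1 : Fin (m + 1)) : ℕ) = ((t : ℕ) + 1) % (m + 1) := by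
          simp [Fin.add_def]
        rcases Nat.lt_or_ge ((t : ℕ) + 1) (m + 1) with h | h
        · rw [hval, Nat.mod_eq_of_lt h, pow_succ', Equiv.Perm.mul_apply]
        · have ht : (t : ℕ) = m := by omega
          have h0 : ((t : ℕ) + 1) % (m + 1) = 0 := by rw [ht]; exact Nat.mod_self _
          rw [hval, h0, pow_zero, ht]
          have : σ ((σ ^ m) i) = (σ ^ (m + 1)) i := by
            rw [pow_succ', Equiv.Perm.mul_apply]
          rw [this, hniter, Equiv.Perm.one_apply]
      have hfix : σ ((σ ^ (t : ℕ)) i) ≠ (σ ^ (t : ℕ)) i := by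
        intro h
        have : (σ ^ (t : ℕ)) (σ i) = (σ ^ (t : ℕ)) i := by
          rw [← Equiv.Perm.mul_apply, ← pow_succ, pow_succ', Equiv.Perm.mul_apply, h]
        exact hi ((σ ^ (t : ℕ)).injective this)
      rcases key ((σ ^ (t : ℕ)) i) with h | h
      · exact absurd h hfix
      · show pref ((σ ^ (t : ℕ)) i)
          (da ((σ ^ ((t + 1 : Fin (m + 1)) : ℕ)) i)) (da ((σ ^ (t : ℕ)) i))
        rw [hshift]
        exact h
  · rintro ⟨m, c, hc, henv, t0, ht0⟩
    -- build the cycle permutation via extendDomain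
    let f : Fin (m + 1) ≃ {x // x ∈ Set.range c} := Equiv.ofInjective c hc
    let σ : Equiv.Perm I := (finRotate (m + 1)).extendDomain f
    have hσc : ∀ t, σ (c t) = c (t + 1) := by
      intro t
      have h1 := Equiv.Perm.extendDomain_apply_image (finRotate (m + 1)) f t
      simpa [f, Equiv.ofInjective_apply, finRotate_succ_apply] using h1
    have hσn : ∀ j, j ∉ Set.range c → σ j = j := by
      intro j hj
      exact Equiv.Perm.extendDomain_apply_not_subtype _ f hj
    let ν0 : I ≃ S := σ.trans da
    have hν0 : WeaklyDominates pref (⇑ν0) (⇑da) := by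
      intro j
      by_cases hj : j ∈ Set.range c
      · obtain ⟨t, rfl⟩ := hj
        right
        have : ν0 (c t) = da (c (t + 1)) := by
          simp only [ν0, Equiv.trans_apply, hσc t]
        rw [this]
        exact henv t
      · left
        simp only [ν0, Equiv.trans_apply, hσn j hj]
    have hν0i : pref i (ν0 i) (da i) := by
      subst ht0
      have : ν0 (c t0) = da (c (t0 + 1)) := by
        simp only [ν0, Equiv.trans_apply, hσc t0]
      rw [this]
      exact henv t0
    obtain ⟨ν', hpe, hwd'⟩ := exists_pe pref hpref ν0
    refine ⟨ν', hpe, wd_trans pref hpref hwd' hν0, ?_⟩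
    haveI := hpref i
    rcases hwd' i with h | h
    · exact h ▸ hν0i
    · exact IsTrans.trans _ _ _ h hν0i
end

section
/- If a matching μ admits a trading cycle in its envy digraph (a simple cycle i_0 → i_1 → ... → i_k → i_0 where each student envies the next), then the matching obtained by giving each student in the cycle the school of the student they point to, leaving all other students unchanged, is a valid matching that Pareto-dominates μ. -/
/-- Executing a trading cycle of the envy digraph of a one-to-one matching `μ`
(giving each student in the cycle the school of the student he points to, all
others unchanged) yields a valid matching that Pareto-dominates `μ`. -/
theorem stmt2 {I S : Type*} (pref : I → S → S → Prop)
    (hpref : ∀ i, IsStrictTotalOrder S (pref i))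
    (μ : I → S) (hμ : Function.Injective μ)
    (m : ℕ) (c : Fin (m + 2) → I) (hc : Function.Injective c)
    (henvy : ∀ t, pref (c t) (μ (c (t + 1))) (μ (c t))) :
    ∃ ν : I → S, Function.Injective ν ∧
      (∀ t, ν (c t) = μ (c (t + 1))) ∧
      (∀ i, (∀ t, c t ≠ i) → ν i = μ i) ∧
      (∀ i, ν i = μ i ∨ pref i (ν i) (μ i)) ∧
      (∃ i, pref i (ν i) (μ i)) := by
  classical
  set σ : I → I := fun i => if h : ∃ t, c t = i then c (Classical.choose h + 1) else i with hσ
  have hσc : ∀ t, σ (c t) = c (t + 1) := by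
    intro t
    have h : ∃ s, c s = c t := ⟨t, rfl⟩
    have := Classical.choose_spec h
    have ht : Classical.choose h = t := hc this
    simp [hσ, dif_pos h, ht]
  have hσinj : Function.Injective σ := by
    intro a b hab
    simp only [hσ] at hab
    by_cases ha : ∃ t, c t = a
    · by_cases hb : ∃ t, c t = b
      · rw [dif_pos ha, dif_pos hb] at hab
        have h1 := hc hab
        have h2 : Classical.choose ha = Classical.choose hb := add_right_cancel h1
        rw [← Classical.choose_spec ha, ← Classical.choose_spec hb, h2]
      · rw [dif_pos ha, dif_neg hb] at hab
        exact absurd ⟨_, hab⟩ hb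
    · by_cases hb : ∃ t, c t = b
      · rw [dif_neg ha, dif_pos hb] at hab
        exact absurd ⟨_, hab.symm⟩ ha
      · rwa [dif_neg ha, dif_neg hb] at hab
  refine ⟨μ ∘ σ, hμ.comp hσinj, fun t => by simp [hσc t], ?_, ?_, ⟨c 0, ?_⟩⟩
  · intro i hi
    have : ¬ ∃ t, c t = i := fun ⟨t, ht⟩ => hi t ht
    simp [hσ, dif_neg this]
  · intro i
    by_cases h : ∃ t, c t = i
    · obtain ⟨t, rfl⟩ := h
      right
      simpa [hσc t] using henvy t
    · left; simp [hσ, dif_neg h]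
  · simpa [hσc 0] using henvy 0
end

section
/- If under the student-proposing DA matching a student i is assigned to his least preferred school (rank n, where n = |S|), and at least one school is under-demanded (received exactly one application during DA), then i's assigned school is the unique under-demanded school. -/
/-- The rank of school `s` for student `i`: one plus the number of schools `i`
strictly prefers to `s`. -/
noncomputable def Rank {I S : Type*} (pref : I → S → S → Prop) (i : I) (s : S) : ℕ :=
  1 + Set.ncard {s' | pref i s' s}

/-- In a one-to-one problem with `n` students and `n` schools, if in DA student
`i` is assigned his least preferred school (rank `n`) and some school is
under-demanded (receives exactly one application), then `i`'s school is the
unique under-demanded school. `applied j s` records that `j` applied to `s`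
during DA; every student applies to his assigned school and to every school he
strictly prefers to it. -/
theorem stmt3 {I S : Type*} [Fintype I] [Fintype S] (pref : I → S → S → Prop)
    (hpref : ∀ i, IsStrictTotalOrder S (pref i))
    (da : I ≃ S) (applied : I → S → Prop)
    (h1 : ∀ j, applied j (da j))
    (h2 : ∀ j s, pref j s (da j) → applied j s)
    (i : I) (hrank : Rank pref i (da i) = Fintype.card S)
    (hex : ∃ s, ∃! j, applied j s) :
    (∃! j, applied j (da i)) ∧ ∀ s, (∃! j, applied j s) → s = da i := by
  classical
  have hirr : ∀ s, ¬ pref i s s := fun s => (hpref i).irrefl s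
  -- i applied to every school
  have hall : ∀ s, applied i s := by
    have hsub : {s' | pref i s' (da i)} ⊆ {da i}ᶜ := by
      intro s hs hmem
      simp only [Set.mem_singleton_iff] at hmem
      exact hirr (da i) (hmem ▸ hs)
    have hcompl : ({da i}ᶜ : Set S).ncard = Fintype.card S - 1 := by
      rw [Set.ncard_eq_toFinset_card']
      simp [Finset.card_compl]
    have hA : {s' | pref i s' (da i)}.ncard = Fintype.card S - 1 := by
      unfold Rank at hrank
      omega
    have heq : {s' | pref i s' (da i)} = {da i}ᶜ := by
      exact Set.eq_of_subset_of_ncard_le hsub (by rw [hcompl, hA]) (Set.toFinite _)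
    intro s
    by_cases hs : s = da i
    · exact hs ▸ h1 i
    · exact h2 i s (by
        have : s ∈ ({da i}ᶜ : Set S) := hs
        rw [← heq] at this
        exact this)
  have key : ∀ s, (∃! j, applied j s) → s = da i := by
    rintro s ⟨j, hj, huniq⟩
    have hi : i = j := huniq i (hall s)
    have hds : da.symm s = j := huniq (da.symm s) (by
      have := h1 (da.symm s)
      rwa [da.apply_symm_apply] at this)
    have : da.symm s = i := hds.trans hi.symm
    rw [← this, da.apply_symm_apply]
  refine ⟨?_, key⟩
  obtain ⟨s, hs⟩ := hex
  exact (key s hs) ▸ hs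
end

section
/- Any student matched in DA to a school that never rejected any student during the execution of DA (an under-demanded school) is unimprovable: every Pareto-efficient matching that Pareto-dominates the DA matching gives that student the same school. -/
/-- Any student matched in DA to an under-demanded school (a school that never
rejected any student during DA, i.e. whose only applicant is its own match) is
unimprovable: every matching weakly Pareto-dominating DA gives him the same
school. `applied j s` records that `j` applied to `s` during DA; every student
applies to his assigned school and to every school he strictly prefers to it. -/
theorem stmt4 {I S : Type*} [Fintype I] [Fintype S] (pref : I → S → S → Prop)
    (hpref : ∀ i, IsStrictTotalOrder S (pref i))
    (da : I ≃ S) (applied : I → S → Prop)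
    (h1 : ∀ j, applied j (da j))
    (h2 : ∀ j s, pref j s (da j) → applied j s)
    (i : I)
    (hunderdemanded : ∀ j, applied j (da i) → j = i) :
    ∀ ν : I ≃ S, (∀ j, ν j = da j ∨ pref j (ν j) (da j)) → ν i = da i := by
  intro ν hν
  set j := ν.symm (da i) with hj
  have hνj : ν j = da i := ν.apply_symm_apply _
  have hji : j = i := by
    rcases hν j with h | h
    · exact da.injective (h ▸ hνj)
    · exact hunderdemanded j (hνj ▸ h2 j (ν j) h)
  exact hji ▸ hνj
end

section
/- In a finite directed graph G on vertex set V with |V| = n, suppose the largest strongly connected component has size at most (1−2ε)·n with ε·n ≥ 1. Then there exist disjoint vertex subsets I_0 and I_1, each of size at least ε·n, such that G contains no directed edge from any vertex of I_0 to any vertex of I_1. -/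
/-- If every strongly connected component of a finite digraph on `n` vertices has
size at most `(1 − 2ε) n` (with `εn ≥ 1`), then there exist disjoint vertex sets
`I₀, I₁`, each of size at least `εn`, with no directed edge from `I₀` to `I₁`. -/
theorem stmt16 {V : Type*} [Fintype V] (E : V → V → Prop)
    (n : ℕ) (hn : n = Fintype.card V)
    (ε : ℝ) (hε0 : 0 < ε) (hε2 : ε < 1 / 2) (hεn : 1 ≤ ε * n)
    (hscc : ∀ v : V,
      (Set.ncard {w | Relation.ReflTransGen E v w ∧ Relation.ReflTransGen E w v} : ℝ)
        ≤ (1 - 2 * ε) * n) :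
    ∃ I0 I1 : Finset V, Disjoint I0 I1 ∧
      ε * n ≤ (I0.card : ℝ) ∧ ε * n ≤ (I1.card : ℝ) ∧
      ∀ i ∈ I0, ∀ j ∈ I1, ¬ E i j := by
  classical
  set R := Relation.ReflTransGen E with hR
  -- The family of "downsets" (closed under E-predecessors) of size ≥ εn.
  set P : Finset V → Prop :=
    fun S => (ε * n ≤ (S.card : ℝ)) ∧ ∀ i j : V, E i j → j ∈ S → i ∈ S with hP
  have hPuniv : P Finset.univ := by
    constructor
    · have : (Finset.univ : Finset V).card = n := by
        rw [hn]; exact Finset.card_univ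
      rw [this]
      calc ε * n ≤ (1 : ℝ) * n := by
            apply mul_le_mul_of_nonneg_right (by linarith) (Nat.cast_nonneg n)
      _ = (n : ℝ) := one_mul _
    · intro i j _ _; exact Finset.mem_univ i
  -- pick S of minimal cardinality in the family
  have hne : ((Finset.univ : Finset (Finset V)).filter P).Nonempty :=
    ⟨Finset.univ, Finset.mem_filter.mpr ⟨Finset.mem_univ _, hPuniv⟩⟩
  obtain ⟨S, hSmem, hmin⟩ :=
    Finset.exists_min_image ((Finset.univ : Finset (Finset V)).filter P)
      (fun S => S.card) hne
  rw [Finset.mem_filter] at hSmem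
  have hScard := hSmem.2.1
  have hSdown := hSmem.2.2
  -- Claim: card S ≤ (1-ε)n
  have hkey : (S.card : ℝ) ≤ (1 - ε) * n := by
    by_contra hbig
    push_neg at hbig
    -- S is nonempty
    have hS0 : 0 < (S.card : ℝ) := lt_of_lt_of_le (by linarith) hScard
    have hSne : S.Nonempty := by
      rw [← Finset.card_pos]
      exact_mod_cast hS0
    -- pick v ∈ S minimizing the set of vertices of S reachable from v
    obtain ⟨v, hvS, hvmin⟩ :=
      Finset.exists_min_image S (fun v => (S.filter (fun w => R v w)).card) hSne
    set U : Finset V := S.filter (fun w => R v w) with hU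
    have hvU : v ∈ U := by
      rw [hU, Finset.mem_filter]
      exact ⟨hvS, Relation.ReflTransGen.refl⟩
    -- every w ∈ U also reaches v, so U ⊆ SCC(v)
    have hUscc : ∀ w ∈ U, R v w ∧ R w v := by
      intro w hw
      rw [hU, Finset.mem_filter] at hw
      refine ⟨hw.2, ?_⟩
      have hsub : S.filter (fun x => R w x) ⊆ U := by
        intro x hx
        rw [Finset.mem_filter] at hx
        rw [hU, Finset.mem_filter]
        exact ⟨hx.1, hw.2.trans hx.2⟩
      have hle : U.card ≤ (S.filter (fun x => R w x)).card := hvmin w hw.1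
      have heq : S.filter (fun x => R w x) = U :=
        Finset.eq_of_subset_of_card_le hsub hle
      have : v ∈ S.filter (fun x => R w x) := heq ▸ hvU
      rw [Finset.mem_filter] at this
      exact this.2
    -- so |U| ≤ (1-2ε)n
    have hUsmall : (U.card : ℝ) ≤ (1 - 2 * ε) * n := by
      have hsub : (↑U : Set V) ⊆ {w | R v w ∧ R w v} := by
        intro w hw
        exact hUscc w hw
      calc (U.card : ℝ) = ((↑U : Set V).ncard : ℝ) := by
            rw [Set.ncard_coe_finset]
      _ ≤ (({w | R v w ∧ R w v} : Set V).ncard : ℝ) := by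
            exact_mod_cast Set.ncard_le_ncard hsub (Set.toFinite _)
      _ ≤ (1 - 2 * ε) * n := hscc v
    -- S \ U is a smaller downset of size ≥ εn : contradiction
    have hUS : U ⊆ S := Finset.filter_subset _ _
    have hcard' : ((S \ U).card : ℝ) = (S.card : ℝ) - U.card := by
      rw [Finset.card_sdiff_of_subset hUS]
      have := Finset.card_le_card hUS
      push_cast [Nat.cast_sub this]
      ring
    have hP' : P (S \ U) := by
      constructor
      · rw [hcard']; linarith
      · intro i j hij hj
        rw [Finset.mem_sdiff] at hj ⊢
        refine ⟨hSdown i j hij hj.1, ?_⟩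
        intro hiU
        apply hj.2
        rw [hU, Finset.mem_filter]
        exact ⟨hj.1, ((hUscc i hiU).1).trans (Relation.ReflTransGen.single hij)⟩
    have hlt : (S \ U).card < S.card := by
      apply Finset.card_lt_card
      constructor
      · exact Finset.sdiff_subset
      · intro hsub
        have := hsub hvS
        rw [Finset.mem_sdiff] at this
        exact this.2 hvU
    have := hmin (S \ U) (Finset.mem_filter.mpr ⟨Finset.mem_univ _, hP'⟩)
    omega
  -- now split
  refine ⟨Sᶜ, S, disjoint_compl_left, ?_, hScard, ?_⟩
  · have hc : (Sᶜ.card : ℕ) = Fintype.card V - S.card := Finset.card_compl S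
    have hle : S.card ≤ Fintype.card V := Finset.card_le_univ S
    have : (Sᶜ.card : ℝ) = (n : ℝ) - S.card := by
      rw [hc, hn]
      push_cast [Nat.cast_sub hle]
      ring
    rw [this]; linarith
  · intro i hi j hj hij
    rw [Finset.mem_compl] at hi
    exact hi (hSdown i j hij hj)
end
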